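/- Let $\varphi: A \to R$ be a flat homomorphism of Noetherian rings of prime characteristic $p > 0$, with $A$ a domain with fraction field $K$. If the relative Frobenius $F_{R/A}: F_*A \otimes_A R \to F_* R$, $a \otimes r \mapsto \varphi(a) r^p$, is injective, then the generic fiber $R \otimes_A K$ is geometrically reduced over $K$. Conversely, if $R \otimes_A K$ is geometrically reduced over $K$, then $F_{R/A}$ is injective. -/

import Mathlib

open Module IsLocalRing

section Frob

/-- `F^e_* M`: the abelian group `M` with `R`-module structure restricted along the
`e`-th iterated Frobenius of `R`. -/
def FrobMod (p e : ℕ) (R M : Type*) : Type _ := M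

instance FrobMod.addCommGroup {p e : ℕ} {R M : Type*} [AddCommGroup M] :
    AddCommGroup (FrobMod p e R M) :=
  inferInstanceAs (AddCommGroup M)

noncomputable instance FrobMod.module {p e : ℕ} {R M : Type*} [CommRing R] [ExpChar R p]
    [AddCommGroup M] [Module R M] : Module R (FrobMod p e R M) :=
  Module.compHom M (iterateFrobenius R p e)

/-- `F^e_* B` (a.k.a. `B^{1/p^e}`) as a ring. -/
def FrobAlg (p e : ℕ) (B : Type*) : Type _ := B

instance FrobAlg.commRing {p e : ℕ} {B : Type*} [CommRing B] : CommRing (FrobAlg p e B) :=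
  inferInstanceAs (CommRing B)

/-- If `B` is an `A`-algebra, then `F^e_* B` is an `A`-algebra via `A → B` composed with
the `e`-th iterated Frobenius of `B`. -/
noncomputable instance FrobAlg.algebra {p e : ℕ} {A B : Type*} [CommRing A] [CommRing B]
    [Algebra A B] [ExpChar B p] : Algebra A (FrobAlg p e B) :=
  ((iterateFrobenius B p e).comp (algebraMap A B)).toAlgebra

/-- The `p`-degree `[k^{1/p^e} : k]` of a ring `k` of characteristic `p`. -/
noncomputable def pDeg (p e : ℕ) (k : Type*) [CommRing k] [ExpChar k p] : ℕ :=
  Module.finrank k (FrobAlg p e k)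

/-- The length of an `R`-module `M`, as the Krull dimension of its submodule lattice. -/
noncomputable def modLength (R M : Type*) [CommRing R] [AddCommGroup M] [Module R M] :
    WithBot ℕ∞ :=
  Order.krullDim (Submodule R M)

/-- The minimal number of generators of an `R`-module `M`. -/
noncomputable def minGens (R M : Type*) [CommRing R] [AddCommGroup M] [Module R M] : ℕ :=
  sInf {n : ℕ | ∃ s : Finset M, s.card = n ∧ Submodule.span R (s : Set M) = ⊤}

/-- The bracket power `I^{[p^e]}`. -/
noncomputable def bracketPow {R : Type*} [CommRing R] (p e : ℕ) [ExpChar R p] (I : Ideal R) :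
    Ideal R :=
  I.map (iterateFrobenius R p e)

end Frob

/-- The canonical ring isomorphism `F^e_* B ≃ B` (the identity on underlying sets). -/
def FrobAlg.equiv (p e : ℕ) (B : Type*) [CommRing B] : FrobAlg p e B ≃+* B :=
  RingEquiv.refl B

open TensorProduct in
/-- The relative Frobenius `F_{R/A} : F_* A ⊗_A R → F_* R`, `a ⊗ r ↦ φ(a) r^p`. -/
noncomputable def relFrob (p : ℕ) [Fact p.Prime] (A R : Type*) [CommRing A] [CommRing R]
    [Algebra A R] [CharP A p] [CharP R p] :
    TensorProduct A (FrobAlg p 1 A) R →ₐ[A] FrobAlg p 1 R :=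
  Algebra.TensorProduct.lift
    { toRingHom :=
        ((FrobAlg.equiv p 1 R).symm.toRingHom.comp
          ((algebraMap A R).comp (FrobAlg.equiv p 1 A).toRingHom))
      commutes' := fun a => by
        show algebraMap A R (iterateFrobenius A p 1 (algebraMap A A a)) =
          iterateFrobenius R p 1 (algebraMap A R a)
        simp [iterateFrobenius_def, frobenius_def, map_pow] }
    { toRingHom := (FrobAlg.equiv p 1 R).symm.toRingHom.comp (iterateFrobenius R p 1)
      commutes' := fun a => by
        show iterateFrobenius R p 1 (algebraMap A R a) =
          iterateFrobenius R p 1 (algebraMap A R a)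
        rfl }
    (fun _ _ => mul_comm _ _)

universe u v

open TensorProduct in
/-- A commutative algebra `S` over a field `K` is geometrically reduced if `L ⊗_K S` is
reduced for every field extension `L` of `K`. -/
def GeomReduced (K : Type u) (S : Type v) [Field K] [CommRing S] [Algebra K S] : Prop :=
  ∀ (L : Type (max u v)) [Field L] [Algebra K L], IsReduced (TensorProduct K L S)
/-!
Over a field `K`, the Frobenius of `F_*K ⊗[K] S` (that is, of `K^{1/p} ⊗[K] S`) is the relative
Frobenius followed by the injection `s ↦ 1 ⊗ s`, so `F_{S/K}` is injective exactly when
`F_*K ⊗[K] S` is reduced; geometric reducedness gives this by taking `L = F_*K`. Conversely,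
injectivity of `F_{S/K}` makes the `p`-th powers of a `K`-basis `(b j)` of `S` linearly
independent, and then `(∑ l j ⊗ b j) ^ p = ∑ l j ^ p ⊗ b j ^ p` vanishes only if every `l j`
does, in every `L ⊗[K] S`.

For a domain `A` with fraction field `K`, `F_*K ⊗[K] (K ⊗[A] R)` is the localization of
`F_*A ⊗[A] R` at `A ∖ 0` and `F_{K ⊗ R/K}` is the localization of `F_{R/A}`. Flatness of `R`
makes `F_*A ⊗[A] R → F_*K ⊗[A] R` and `F_*R → F_*(K ⊗[A] R)` injective, so injectivity passes
between `F_{R/A}` and `F_{K ⊗ R/K}` in both directions.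
-/

open TensorProduct

theorem FrobAlg.equiv_algebraMap {p : ℕ} {A B : Type*} [CommRing A] [CommRing B] [Algebra A B]
    [ExpChar B p] (a : A) :
    FrobAlg.equiv p 1 B (algebraMap A (FrobAlg p 1 B) a) = algebraMap A B a ^ p :=
  iterateFrobenius_one_apply _ _ _

theorem FrobAlg.equiv_smul {p : ℕ} {A B : Type*} [CommRing A] [CommRing B] [Algebra A B]
    [ExpChar B p] (a : A) (x : FrobAlg p 1 B) :
    FrobAlg.equiv p 1 B (a • x) = algebraMap A B a ^ p * FrobAlg.equiv p 1 B x := by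
  rw [Algebra.smul_def, map_mul, FrobAlg.equiv_algebraMap]

noncomputable def FrobAlg.map {p e : ℕ} {A B C : Type*} [CommRing A] [CommRing B] [CommRing C]
    [Algebra A B] [Algebra A C] [ExpChar B p] [ExpChar C p] (f : B →ₐ[A] C) :
    FrobAlg p e B →ₐ[A] FrobAlg p e C where
  toRingHom := (FrobAlg.equiv p e C).symm.toRingHom.comp
    (f.toRingHom.comp (FrobAlg.equiv p e B).toRingHom)
  commutes' a := by
    change f (iterateFrobenius B p e (algebraMap A B a)) =
      iterateFrobenius C p e (algebraMap A C a)
    rw [iterateFrobenius_def, iterateFrobenius_def, map_pow, AlgHom.commutes]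

theorem FrobAlg.equiv_map {p e : ℕ} {A B C : Type*} [CommRing A] [CommRing B] [CommRing C]
    [Algebra A B] [Algebra A C] [ExpChar B p] [ExpChar C p] (f : B →ₐ[A] C) (x : FrobAlg p e B) :
    FrobAlg.equiv p e C (FrobAlg.map f x) = f (FrobAlg.equiv p e B x) :=
  rfl

instance FrobAlg.isScalarTower {p e : ℕ} {A K B : Type*} [CommRing A] [CommRing K] [CommRing B]
    [Algebra A K] [Algebra K B] [Algebra A B] [IsScalarTower A K B] [ExpChar B p] :
    IsScalarTower A K (FrobAlg p e B) :=
  IsScalarTower.of_algebraMap_eq fun a ↦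
    congrArg (iterateFrobenius B p e) (IsScalarTower.algebraMap_apply A K B a)

instance FrobAlg.field {p e : ℕ} {K : Type*} [Field K] : Field (FrobAlg p e K) :=
  inferInstanceAs (Field K)

theorem relFrob_tmul (p : ℕ) [Fact p.Prime] (A R : Type*) [CommRing A] [CommRing R] [Algebra A R]
    [CharP A p] [CharP R p] (a : FrobAlg p 1 A) (r : R) :
    FrobAlg.equiv p 1 R (relFrob p A R (a ⊗ₜ[A] r)) =
      algebraMap A R (FrobAlg.equiv p 1 A a) * r ^ p :=
  congrArg (algebraMap A R (FrobAlg.equiv p 1 A a) * ·) (iterateFrobenius_one_apply _ _ _)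

theorem Algebra.TensorProduct.charP_of_flat_right (p : ℕ) {R A B : Type*} [CommRing R]
    [CommRing A] [Algebra R A] [CommRing B] [Algebra R B] [Module.Flat R B] [CharP B p]
    (h : Function.Injective (algebraMap R A)) : CharP (A ⊗[R] B) p :=
  charP_of_injective_ringHom (Algebra.TensorProduct.includeRight_injective h) p

section Field

variable (p : ℕ) [hp : Fact p.Prime] {K : Type u} {S : Type v} [Field K] [CommRing S] [Algebra K S]

theorem isReduced_tensorProduct_of_linearIndependent_pow [CharP S p] {ι : Type*} (b : Basis ι K S)
    (h : LinearIndependent K (b · ^ p)) (L : Type*) [Field L] [Algebra K L] :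
    IsReduced (L ⊗[K] S) := by
  have := Algebra.TensorProduct.charP_of_flat_right p (algebraMap K L).injective (B := S)
  rw [isReduced_iff_pow_one_lt p hp.out.one_lt]
  intro y hy
  let b' := b.baseChange L
  have hind : LinearIndependent L fun j ↦ (1 : L) ⊗ₜ[K] (b j ^ p) :=
    Module.Flat.linearIndependent_one_tmul h
  have hpow : ∑ j ∈ (b'.repr y).support, b'.repr y j ^ p • (1 : L) ⊗ₜ[K] (b j ^ p) = 0 := by
    rw [← hy]
    conv_rhs => rw [← b'.linearCombination_repr y, Finsupp.linearCombination_apply, Finsupp.sum]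
    rw [sum_pow_char]
    refine Finset.sum_congr rfl fun j _ ↦ ?_
    rw [smul_pow, Basis.baseChange_apply, Algebra.TensorProduct.tmul_pow, one_pow]
  suffices b'.repr y = 0 from b'.repr.map_eq_zero_iff.mp this
  ext j
  by_cases hj : j ∈ (b'.repr y).support
  · exact pow_eq_zero_iff hp.out.ne_zero |>.mp (linearIndependent_iff'.mp hind _ _ hpow j hj)
  · exact Finsupp.notMem_support_iff.mp hj

variable [CharP K p]

theorem isReduced_frobAlg_tensorProduct_of_geomReduced (h : GeomReduced K S) :
    IsReduced (FrobAlg p 1 K ⊗[K] S) :=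
  have := h (ULift.{v} (FrobAlg p 1 K))
  isReduced_of_injective
    (Algebra.TensorProduct.congr (ULift.algEquiv (R := K)).symm AlgEquiv.refl).toAlgHom
    (AlgEquiv.injective _)

variable [CharP S p]

theorem pow_char_eq_one_tmul_relFrob (x : FrobAlg p 1 K ⊗[K] S) :
    x ^ p = 1 ⊗ₜ FrobAlg.equiv p 1 S (relFrob p K S x) := by
  have := Algebra.TensorProduct.charP_of_flat_right p (A := FrobAlg p 1 K) (B := S)
    (algebraMap K _).injective
  induction x using TensorProduct.induction_on with
  | zero => simp [hp.out.ne_zero]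
  | add x y hx hy => rw [add_pow_char, hx, hy, map_add, map_add, tmul_add]
  | tmul a s =>
    -- `a ^ p = a • 1` in `F_*K`, and this scalar moves across the tensor sign.
    rw [relFrob_tmul, Algebra.TensorProduct.tmul_pow, ← Algebra.smul_def, ← smul_tmul,
      Algebra.smul_def, mul_one]
    exact congrArg (· ⊗ₜ[K] (s ^ p)) (iterateFrobenius_one_apply K p a).symm

theorem relFrob_injective_iff_isReduced :
    Function.Injective (relFrob p K S) ↔ IsReduced (FrobAlg p 1 K ⊗[K] S) := by
  have one_tmul_eq_zero (s : S) : (1 : FrobAlg p 1 K) ⊗ₜ[K] s = 0 ↔ s = 0 :=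
    (Algebra.TensorProduct.includeRight_injective (algebraMap K (FrobAlg p 1 K)).injective).eq_iff'
      (map_zero _)
  simp_rw [isReduced_iff_pow_one_lt p hp.out.one_lt, injective_iff_map_eq_zero,
    pow_char_eq_one_tmul_relFrob, one_tmul_eq_zero, map_eq_zero_iff _ (RingEquiv.injective _)]

theorem linearIndependent_pow_of_relFrob_injective {ι : Type*} (b : Basis ι K S)
    (h : Function.Injective (relFrob p K S)) : LinearIndependent K (b · ^ p) := by
  rw [linearIndependent_iff']
  intro s g hg i hi
  let c (j : ι) : FrobAlg p 1 K := (FrobAlg.equiv p 1 K).symm (g j)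
  have hrelFrob : relFrob p K S (∑ j ∈ s, c j ⊗ₜ[K] b j) = 0 := by
    apply (FrobAlg.equiv p 1 S).injective
    simp_rw [map_sum, relFrob_tmul, c, RingEquiv.apply_symm_apply, ← Algebra.smul_def, hg, map_zero]
  have hc : ∑ j ∈ s, c j • b.baseChange (FrobAlg p 1 K) j = 0 := by
    simp_rw [Basis.baseChange_apply, smul_tmul', smul_eq_mul, mul_one]
    exact (injective_iff_map_eq_zero _).mp h _ hrelFrob
  simpa [c] using
    linearIndependent_iff'.mp (b.baseChange (FrobAlg p 1 K)).linearIndependent s c hc i hi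

theorem geomReduced_iff_relFrob_injective :
    GeomReduced K S ↔ Function.Injective (relFrob p K S) :=
  ⟨fun h ↦ (relFrob_injective_iff_isReduced p).mpr
      (isReduced_frobAlg_tensorProduct_of_geomReduced p h),
    fun h L _ _ ↦ isReduced_tensorProduct_of_linearIndependent_pow p
      (Module.Basis.ofVectorSpace K S) (linearIndependent_pow_of_relFrob_injective p _ h) L⟩

end Field

section FractionField

variable (p : ℕ) [hp : Fact p.Prime] (A K R : Type*) [CommRing A] [CharP A p]
  [Field K] [CharP K p] [Algebra A K] [CommRing R] [Algebra A R]

noncomputable def frobTensorToFraction :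
    FrobAlg p 1 A ⊗[A] R →ₗ[A] FrobAlg p 1 K ⊗[K] (K ⊗[A] R) :=
  (AlgebraTensorModule.cancelBaseChange A K K (FrobAlg p 1 K) R).symm.restrictScalars A ∘ₗ
    AlgebraTensorModule.rTensor A R (FrobAlg.map (Algebra.ofId A K)).toLinearMap

theorem frobTensorToFraction_tmul (a : FrobAlg p 1 A) (r : R) :
    frobTensorToFraction p A K R (a ⊗ₜ r) = FrobAlg.map (Algebra.ofId A K) a ⊗ₜ (1 ⊗ₜ r) :=
  rfl

theorem relFrob_frobTensorToFraction [CharP R p] [CharP (K ⊗[A] R) p]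
    (x : FrobAlg p 1 A ⊗[A] R) :
    FrobAlg.equiv p 1 (K ⊗[A] R) (relFrob p K (K ⊗[A] R) (frobTensorToFraction p A K R x)) =
      Algebra.TensorProduct.includeRight (FrobAlg.equiv p 1 R (relFrob p A R x)) := by
  induction x using TensorProduct.induction_on with
  | zero => simp only [map_zero]
  | add x y hx hy => simp only [map_add, hx, hy]
  | tmul a r =>
    rw [frobTensorToFraction_tmul, relFrob_tmul, FrobAlg.equiv_map, relFrob_tmul,
      Algebra.ofId_apply, ← IsScalarTower.algebraMap_apply, map_mul, AlgHom.commutes, map_pow,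
      Algebra.TensorProduct.includeRight_apply]

variable [IsFractionRing A K]

instance FrobAlg.isLocalizedModule_map_ofId : IsLocalizedModule (nonZeroDivisors A)
    (FrobAlg.map (p := p) (e := 1) (Algebra.ofId A K)).toLinearMap where
  map_units s := by
    rw [Module.End.isUnit_iff]
    have hs : algebraMap A K s ^ p ≠ 0 := pow_ne_zero _ (IsLocalization.map_units K s).ne_zero
    have : ⇑(algebraMap A (Module.End A (FrobAlg p 1 K)) s) = (algebraMap A K s ^ p * ·) :=
      funext fun x ↦ congrArg (· * x) (iterateFrobenius_one_apply K p _)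
    rw [this]
    exact mulLeft_bijective₀ _ hs
  surj y := by
    obtain ⟨⟨n, d⟩, hy⟩ := IsLocalization.surj (nonZeroDivisors A) (FrobAlg.equiv p 1 K y)
    refine ⟨⟨(FrobAlg.equiv p 1 A).symm (d ^ (p - 1) * n), d⟩, ?_⟩
    apply (FrobAlg.equiv p 1 K).injective
    dsimp only at hy ⊢
    rw [Submonoid.smul_def, FrobAlg.equiv_smul, AlgHom.toLinearMap_apply, FrobAlg.equiv_map,
      RingEquiv.apply_symm_apply, Algebra.ofId_apply, map_mul, map_pow, ← hy,
      ← pow_sub_one_mul hp.out.ne_zero]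
    ring
  exists_of_eq h := ⟨1, by rw [one_smul, one_smul]; exact IsFractionRing.injective A K h⟩

instance isLocalizedModule_frobTensorToFraction :
    IsLocalizedModule (nonZeroDivisors A) (frobTensorToFraction p A K R) :=
  IsLocalizedModule.of_linearEquiv _ _ _

theorem frobTensorToFraction_injective [Module.Flat A R] :
    Function.Injective (frobTensorToFraction p A K R) :=
  (AlgebraTensorModule.cancelBaseChange A K K (FrobAlg p 1 K) R).symm.injective.comp <|
    Module.Flat.rTensor_preserves_injective_linearMap (M := R)
      (FrobAlg.map (p := p) (e := 1) (Algebra.ofId A K)).toLinearMap (IsFractionRing.injective A K)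

theorem relFrob_injective_iff_relFrob_fraction_injective [Module.Flat A R] [CharP R p]
    [CharP (K ⊗[A] R) p] :
    Function.Injective (relFrob p A R) ↔ Function.Injective (relFrob p K (K ⊗[A] R)) := by
  have hinclude := Algebra.TensorProduct.includeRight_injective (B := R)
    (IsFractionRing.injective A K)
  refine ⟨fun h ↦ ?_, fun h x y hxy ↦ ?_⟩
  · refine IsLocalizedModule.injective_of_map_zero (nonZeroDivisors A)
      (frobTensorToFraction p A K R) (g := (relFrob p K (K ⊗[A] R)).toLinearMap.restrictScalars A)
      fun x hx ↦ ?_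
    replace hx := congrArg (FrobAlg.equiv p 1 (K ⊗[A] R)) hx
    rw [LinearMap.restrictScalars_apply, AlgHom.toLinearMap_apply, relFrob_frobTensorToFraction,
      map_zero, map_eq_zero_iff _ hinclude, map_eq_zero_iff _ (RingEquiv.injective _)] at hx
    rw [(injective_iff_map_eq_zero _).mp h x hx, map_zero]
  · apply frobTensorToFraction_injective p A K R
    apply h
    apply (FrobAlg.equiv p 1 (K ⊗[A] R)).injective
    rw [relFrob_frobTensorToFraction, relFrob_frobTensorToFraction, hxy]

end FractionField

theorem stmt11_general (p : ℕ) [Fact p.Prime] (A R : Type*) [CommRing A] [CommRing R]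
    [IsDomain A] [CharP A p] [CharP R p]
    [Algebra A R] [Module.Flat A R] :
    Function.Injective (relFrob p A R) ↔
      GeomReduced (FractionRing A) (TensorProduct A (FractionRing A) R) := by
  have hK := IsFractionRing.injective A (FractionRing A)
  have : CharP (FractionRing A) p := charP_of_injective_algebraMap hK p
  have : CharP (FractionRing A ⊗[A] R) p := Algebra.TensorProduct.charP_of_flat_right p hK
  rw [relFrob_injective_iff_relFrob_fraction_injective p A (FractionRing A) R,
    geomReduced_iff_relFrob_injective p]

/-- Dumitrescu-type criterion: for a flat map `A → R` of Noetherian rings of prime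
characteristic `p` with `A` a domain with fraction field `K`, the relative Frobenius
`F_{R/A}` is injective if and only if the generic fiber `R ⊗_A K` is geometrically
reduced over `K`. -/
theorem stmt11 (p : ℕ) [Fact p.Prime] (A R : Type*) [CommRing A] [CommRing R]
    [IsNoetherianRing A] [IsNoetherianRing R] [IsDomain A] [CharP A p] [CharP R p]
    [Algebra A R] [Module.Flat A R] :
    Function.Injective (relFrob p A R) ↔
      GeomReduced (FractionRing A) (TensorProduct A (FractionRing A) R) :=
  stmt11_general p A R
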